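/- For every fixed integer m ≥ 0, the function X ↦ X · I_m'(X) / I_m(X) is strictly increasing on (0, ∞), where I_m denotes the modified Bessel function of the first kind of order m. Consequently, for every α > 0 the equation X · I_m'(X) / I_m(X) = α has at most one solution X ∈ (0, ∞). -/

import Mathlib

/-!
Write `I_m(x) = ∑ c_n x^(d_n)` with `c_n > 0` and `d_n = 2n + |m|`, and let `M_k = ∑ d_n^k c_n x^(d_n)`,
so that `x d/dx M_k = M_(k+1)`. Then `x I_m'/I_m = M₁/M₀` is the mean of `d` under the weights
`c_n x^(d_n)`, and `x d/dx (M₁/M₀) = (M₂M₀ - M₁²)/M₀²` is their variance, which is positive because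
`d` is not constant.
-/

/-- The modified Bessel function of the first kind of (integer) order `m`,
defined by its power series `I_m(X) = ∑_{n≥0} (X/2)^(2n+|m|) / (n! (n+|m|)!)`. -/
noncomputable def besselI (m : ℤ) (X : ℝ) : ℝ :=
  ∑' n : ℕ, (X / 2) ^ (2 * n + m.natAbs) / ((n.factorial : ℝ) * ((n + m.natAbs).factorial : ℝ))

open Set Nat

/-- `(x d/dx)^k` applied to `∑ c n x ^ d n`. -/
noncomputable def momentSeries (c : ℕ → ℝ) (d : ℕ → ℕ) (k : ℕ) (x : ℝ) : ℝ :=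
  ∑' n, (d n : ℝ) ^ k * c n * x ^ d n

theorem natCast_mul_pow_pred {y : ℝ} (hy : y ≠ 0) (m : ℕ) :
    (m : ℝ) * y ^ (m - 1) = m * y ^ m / y := by
  cases m with
  | zero => simp
  | succ m => rw [Nat.add_sub_cancel, pow_succ]; field_simp

section
variable {c : ℕ → ℝ} {d : ℕ → ℕ}

theorem summable_momentSeries (hc : ∀ n, 0 ≤ c n)
    (hs : ∀ x, 0 ≤ x → Summable fun n => c n * x ^ d n) (k : ℕ) {x : ℝ} (hx : 0 ≤ x) :
    Summable fun n => (d n : ℝ) ^ k * c n * x ^ d n := by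
  refine .of_nonneg_of_le (fun n => by have := hc n; positivity) (fun n => ?_)
    ((hs (Real.exp 1 * x) (by positivity)).mul_left (k ! : ℝ))
  have hd : (d n : ℝ) ^ k ≤ k ! * Real.exp 1 ^ d n := by
    rw [Real.exp_one_pow, ← div_le_iff₀' (by positivity)]
    exact Real.pow_div_factorial_le_exp _ (Nat.cast_nonneg _) k
  calc (d n : ℝ) ^ k * c n * x ^ d n ≤ (k ! * Real.exp 1 ^ d n) * c n * x ^ d n := by
        have := hc n; gcongr
    _ = k ! * (c n * (Real.exp 1 * x) ^ d n) := by ring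

theorem hasDerivAt_momentSeries (hc : ∀ n, 0 ≤ c n)
    (hs : ∀ x, 0 ≤ x → Summable fun n => c n * x ^ d n) (k : ℕ) {x : ℝ} (hx : 0 < x) :
    HasDerivAt (momentSeries c d k) (momentSeries c d (k + 1) x / x) x := by
  have hR : 0 < x + 1 := by linarith
  have hbound : ∀ n, ∀ y ∈ Ioo 0 (x + 1), ‖(d n : ℝ) ^ k * c n * (d n * y ^ (d n - 1))‖ ≤
      (d n : ℝ) ^ (k + 1) * c n * (x + 1) ^ d n / (x + 1) := by
    intro n y hy
    have := hc n
    rw [pow_succ, mul_right_comm _ (d n : ℝ), mul_assoc _ (d n : ℝ), mul_div_assoc,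
      ← natCast_mul_pow_pred hR.ne', Real.norm_of_nonneg (by have := hy.1.le; positivity)]
    gcongr
    exacts [hy.1.le, hy.2.le]
  have hsum := (summable_momentSeries hc hs (k + 1) hR.le).div_const (x + 1)
  have := hasDerivAt_tsum_of_isPreconnected hsum isOpen_Ioo isPreconnected_Ioo
    (fun n y _ => (hasDerivAt_pow (d n) y).const_mul ((d n : ℝ) ^ k * c n)) hbound
    (y₀ := x) ⟨hx, by linarith⟩ (summable_momentSeries hc hs k hx.le) ⟨hx, by linarith⟩
  refine this.congr_deriv ?_
  rw [momentSeries, ← tsum_div_const]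
  congr 1 with n
  rw [natCast_mul_pow_pred hx.ne']
  ring

theorem momentSeries_zero_pos (hc : ∀ n, 0 ≤ c n)
    (hs : ∀ x, 0 ≤ x → Summable fun n => c n * x ^ d n) {i : ℕ} (hi : 0 < c i) {x : ℝ}
    (hx : 0 < x) : 0 < momentSeries c d 0 x :=
  (by positivity : 0 < (d i : ℝ) ^ 0 * c i * x ^ d i).trans_le <|
    (summable_momentSeries hc hs 0 hx.le).le_tsum i fun n _ => by have := hc n; positivity

theorem sq_momentSeries_one_lt (hc : ∀ n, 0 ≤ c n)
    (hs : ∀ x, 0 ≤ x → Summable fun n => c n * x ^ d n) {i j : ℕ} (hi : 0 < c i)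
    (hj : 0 < c j) (hij : d i ≠ d j) {x : ℝ} (hx : 0 < x) :
    momentSeries c d 1 x ^ 2 < momentSeries c d 2 x * momentSeries c d 0 x := by
  set M := fun k => momentSeries c d k x
  have hM₀ : 0 < M 0 := momentSeries_zero_pos hc hs hi hx
  set μ := M 1 / M 0
  -- `∑ q = M₀ · Var(d)`, with `μ` the mean of `d`
  set q := fun n => ((d n : ℝ) - μ) ^ 2 * (c n * x ^ d n)
  have hq_nonneg : ∀ n, 0 ≤ q n := fun n => by have := hc n; positivity
  have hq : HasSum q (M 2 - 2 * μ * M 1 + μ ^ 2 * M 0) := by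
    have h := fun k => (summable_momentSeries hc hs k hx.le).hasSum
    have hsum := ((h 2).sub ((h 1).mul_left (2 * μ))).add ((h 0).mul_left (μ ^ 2))
    exact hsum.congr_fun fun n => by simp only [q]; ring
  obtain ⟨n, hn, hdn⟩ : ∃ n, 0 < c n ∧ (d n : ℝ) - μ ≠ 0 := by
    by_cases hμ : (d i : ℝ) = μ
    · refine ⟨j, hj, sub_ne_zero.mpr ?_⟩
      rw [← hμ]
      exact_mod_cast hij.symm
    · exact ⟨i, hi, sub_ne_zero.mpr hμ⟩
  have hqn : 0 < q n := by positivity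
  have hvar : 0 < M 2 - 2 * μ * M 1 + μ ^ 2 * M 0 :=
    hqn.trans_le (le_hasSum hq n fun m _ => hq_nonneg m)
  have : (M 2 - 2 * μ * M 1 + μ ^ 2 * M 0) * M 0 = M 2 * M 0 - M 1 ^ 2 := by
    simp only [μ]; field_simp; ring
  nlinarith [mul_pos hvar hM₀]

theorem strictMonoOn_momentSeries_div (hc : ∀ n, 0 ≤ c n)
    (hs : ∀ x, 0 ≤ x → Summable fun n => c n * x ^ d n) {i j : ℕ} (hi : 0 < c i)
    (hj : 0 < c j) (hij : d i ≠ d j) :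
    StrictMonoOn (fun x => momentSeries c d 1 x / momentSeries c d 0 x) (Ioi 0) := by
  have hderiv : ∀ x ∈ Ioi (0 : ℝ), HasDerivAt (fun x => momentSeries c d 1 x / momentSeries c d 0 x)
      ((momentSeries c d 2 x * momentSeries c d 0 x - momentSeries c d 1 x ^ 2) /
        (x * momentSeries c d 0 x ^ 2)) x := by
    intro x hx
    have hM₀ := (momentSeries_zero_pos hc hs hi hx).ne'
    refine ((hasDerivAt_momentSeries hc hs 1 hx).div
      (hasDerivAt_momentSeries hc hs 0 hx) hM₀).congr_deriv ?_
    field_simp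
  refine strictMonoOn_of_deriv_pos (convex_Ioi 0)
    (fun x hx => (hderiv x hx).continuousAt.continuousWithinAt) fun x hx => ?_
  rw [interior_Ioi] at hx
  rw [(hderiv x hx).deriv]
  have := momentSeries_zero_pos hc hs hi hx
  exact div_pos (sub_pos.mpr (sq_momentSeries_one_lt hc hs hi hj hij hx))
    (mul_pos hx (pow_pos this 2))

theorem strictMonoOn_mul_deriv_div_momentSeries (hc : ∀ n, 0 ≤ c n)
    (hs : ∀ x, 0 ≤ x → Summable fun n => c n * x ^ d n) {i j : ℕ} (hi : 0 < c i)
    (hj : 0 < c j) (hij : d i ≠ d j) :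
    StrictMonoOn (fun x => x * deriv (momentSeries c d 0) x / momentSeries c d 0 x) (Ioi 0) := by
  intro x hx y hy hxy
  have h : ∀ z ∈ Ioi (0 : ℝ), z * deriv (momentSeries c d 0) z / momentSeries c d 0 z =
      momentSeries c d 1 z / momentSeries c d 0 z := fun z hz => by
    rw [(hasDerivAt_momentSeries hc hs 0 hz).deriv, mul_div_cancel₀ _ (ne_of_gt hz)]
  simp only [h x hx, h y hy]
  exact strictMonoOn_momentSeries_div hc hs hi hj hij hx hy hxy

end

noncomputable def besselICoeff (μ n : ℕ) : ℝ := ((n ! : ℝ) * (n + μ)! * 2 ^ (2 * n + μ))⁻¹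

theorem besselICoeff_pos (μ n : ℕ) : 0 < besselICoeff μ n := by
  unfold besselICoeff; positivity

theorem besselI_eq_momentSeries (m : ℤ) :
    besselI m = momentSeries (besselICoeff m.natAbs) (fun n => 2 * n + m.natAbs) 0 := by
  ext x
  refine tsum_congr fun n => ?_
  rw [besselICoeff, div_pow]
  push_cast
  field_simp

theorem summable_besselICoeff_mul_pow (μ : ℕ) (x : ℝ) :
    Summable fun n => besselICoeff μ n * x ^ (2 * n + μ) := by
  set y := |x| / 2
  refine .of_norm_bounded ((Real.summable_pow_div_factorial (y ^ 2)).mul_left (y ^ μ)) fun n => ?_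
  have hfac : (1 : ℝ) ≤ (n + μ)! := mod_cast (n + μ).factorial_pos
  calc ‖besselICoeff μ n * x ^ (2 * n + μ)‖ = y ^ μ * ((y ^ 2) ^ n / n !) / (n + μ)! := by
        rw [norm_mul, norm_pow, Real.norm_of_nonneg (besselICoeff_pos μ n).le, besselICoeff,
          Real.norm_eq_abs, ← pow_mul, div_pow, div_pow]
        field_simp
        ring
    _ ≤ y ^ μ * ((y ^ 2) ^ n / n !) := div_le_self (by positivity) hfac

theorem besselI_logderiv_strictMono_general (m : ℤ) :
    StrictMonoOn (fun X : ℝ => X * deriv (besselI m) X / besselI m X) (Set.Ioi 0) ∧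
    ∀ α : ℝ, 0 < α →
      ∀ X₁ ∈ Set.Ioi (0 : ℝ), ∀ X₂ ∈ Set.Ioi (0 : ℝ),
        X₁ * deriv (besselI m) X₁ / besselI m X₁ = α →
        X₂ * deriv (besselI m) X₂ / besselI m X₂ = α → X₁ = X₂ := by
  have hmono : StrictMonoOn (fun X : ℝ => X * deriv (besselI m) X / besselI m X) (Ioi 0) := by
    rw [besselI_eq_momentSeries]
    exact strictMonoOn_mul_deriv_div_momentSeries (fun n => (besselICoeff_pos _ n).le)
      (fun x _ => summable_besselICoeff_mul_pow _ x) (besselICoeff_pos _ 0)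
      (besselICoeff_pos _ 1) (by omega)
  exact ⟨hmono, fun _ _ X₁ h₁ X₂ h₂ e₁ e₂ => hmono.injOn h₁ h₂ (e₁.trans e₂.symm)⟩

theorem besselI_logderiv_strictMono (m : ℤ) (hm : 0 ≤ m) :
    StrictMonoOn (fun X : ℝ => X * deriv (besselI m) X / besselI m X) (Set.Ioi 0) ∧
    ∀ α : ℝ, 0 < α →
      ∀ X₁ ∈ Set.Ioi (0 : ℝ), ∀ X₂ ∈ Set.Ioi (0 : ℝ),
        X₁ * deriv (besselI m) X₁ / besselI m X₁ = α →
        X₂ * deriv (besselI m) X₂ / besselI m X₂ = α → X₁ = X₂ :=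
  besselI_logderiv_strictMono_general m
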